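/- arXiv:1807.10198 — 8 statements merged into one kernel-verified Lean document; each statement's English description precedes it below -/
import Mathlib

section
/- Let g : ℝⁿ → ℝⁿ be η-quasisymmetric with g(0) = 0, and let u, v : B(0, r₀) → ℝⁿ satisfy u(x) → 0 and v(x) → 0 as x → 0 and u ∼ v as x → 0. Then g ∘ u ∼ g ∘ v as x → 0, i.e. for every ε > 0 there is δ > 0 such that |g(u(x)) − g(v(x))| ≤ ε(|g(u(x))| + |g(v(x))|) whenever |x| < δ. -/
open Set

/-! Take the base point `z = 0` in the quasisymmetry inequality: since `g 0 = 0`, it bounds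
`‖g a - g b‖` by `η (‖a - b‖ / ‖a‖) * ‖g a‖` for `a ≠ 0`. When `‖b‖ ≤ ‖a‖` and
`‖a - b‖ ≤ (t / 2) (‖a‖ + ‖b‖)`, the ratio is at most `t`, and `η t` can be made as small as we
like because `η` is a monotone bijection of `[0, ∞)`, hence `η 0 = 0`. -/

section Quasisymmetric

variable {E F : Type*} [NormedAddGroup E] [SeminormedAddGroup F]

def IsQuasisymmetricWith (η : ℝ → ℝ) (g : E → F) : Prop :=
  ∀ x y z : E, x ≠ z → ‖g x - g y‖ ≤ η (‖x - y‖ / ‖x - z‖) * ‖g x - g z‖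

variable {η : ℝ → ℝ} {g : E → F} {ε t : ℝ}

theorem IsQuasisymmetricWith.norm_sub_le_of_norm_le (hg : IsQuasisymmetricWith η g)
    (hg0 : g 0 = 0) (hη : MonotoneOn η (Ici 0)) (ht : 0 ≤ t) (hηt : η t ≤ ε) (hε : 0 ≤ ε)
    {a b : E} (hba : ‖b‖ ≤ ‖a‖) (hab : ‖a - b‖ ≤ t / 2 * (‖a‖ + ‖b‖)) :
    ‖g a - g b‖ ≤ ε * (‖g a‖ + ‖g b‖) := by
  rcases eq_or_ne a 0 with rfl | ha
  · obtain rfl : b = 0 := norm_le_zero_iff.mp (by simpa using hba)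
    simp [hg0]
  have ha' : 0 < ‖a‖ := norm_pos_iff.mpr ha
  have hratio : ‖a - b‖ / ‖a‖ ≤ t := by
    rw [div_le_iff₀ ha']
    nlinarith
  have hqs := hg a b 0 ha
  rw [sub_zero, hg0, sub_zero] at hqs
  calc ‖g a - g b‖ ≤ η (‖a - b‖ / ‖a‖) * ‖g a‖ := hqs
    _ ≤ ε * ‖g a‖ := by
      gcongr
      exact (hη (div_nonneg (norm_nonneg _) (norm_nonneg _)) ht hratio).trans hηt
    _ ≤ ε * (‖g a‖ + ‖g b‖) := by gcongr; exact le_add_of_nonneg_right (norm_nonneg _)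

theorem IsQuasisymmetricWith.norm_sub_le (hg : IsQuasisymmetricWith η g) (hg0 : g 0 = 0)
    (hη : MonotoneOn η (Ici 0)) (ht : 0 ≤ t) (hηt : η t ≤ ε) (hε : 0 ≤ ε) {a b : E}
    (hab : ‖a - b‖ ≤ t / 2 * (‖a‖ + ‖b‖)) :
    ‖g a - g b‖ ≤ ε * (‖g a‖ + ‖g b‖) := by
  rcases le_total ‖b‖ ‖a‖ with hle | hle
  · exact hg.norm_sub_le_of_norm_le hg0 hη ht hηt hε hle hab
  · rw [norm_sub_rev, add_comm] at hab ⊢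
    exact hg.norm_sub_le_of_norm_le hg0 hη ht hηt hε hle hab

end Quasisymmetric

section SelfMapOfIci

variable {η : ℝ → ℝ}

theorem MonotoneOn.map_zero_of_surjOn_Ici (hη : MonotoneOn η (Ici 0))
    (hmaps : MapsTo η (Ici 0) (Ici 0)) (hsurj : SurjOn η (Ici 0) (Ici 0)) : η 0 = 0 := by
  obtain ⟨s, hs, hηs⟩ := hsurj (self_mem_Ici : (0 : ℝ) ∈ Ici 0)
  exact le_antisymm (hηs ▸ hη self_mem_Ici hs hs) (hmaps self_mem_Ici)

theorem MonotoneOn.exists_pos_map_eq_of_surjOn_Ici (hη : MonotoneOn η (Ici 0))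
    (hmaps : MapsTo η (Ici 0) (Ici 0)) (hsurj : SurjOn η (Ici 0) (Ici 0)) {ε : ℝ}
    (hε : 0 < ε) : ∃ t > 0, η t = ε := by
  obtain ⟨t, ht, hηt⟩ := hsurj (le_of_lt hε : ε ∈ Ici 0)
  refine ⟨t, lt_of_le_of_ne ht ?_, hηt⟩
  rintro rfl
  rw [hη.map_zero_of_surjOn_Ici hmaps hsurj] at hηt
  exact hε.ne hηt

end SelfMapOfIci

theorem qs_comp_left_sim_general {n : ℕ} (r₀ : ℝ)
    (η : ℝ → ℝ)
    (hη_mono : StrictMonoOn η (Set.Ici 0))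
    (hη_bij : Set.BijOn η (Set.Ici 0) (Set.Ici 0))
    (g u v : EuclideanSpace ℝ (Fin n) → EuclideanSpace ℝ (Fin n))
    (hg0 : g 0 = 0)
    (hqs : ∀ x y z : EuclideanSpace ℝ (Fin n), x ≠ z →
      ‖g x - g y‖ ≤ η (‖x - y‖ / ‖x - z‖) * ‖g x - g z‖)
    (huv : ∀ ε > (0 : ℝ), ∃ δ > (0 : ℝ), ∀ x : EuclideanSpace ℝ (Fin n),
      ‖x‖ < r₀ → ‖x‖ < δ → ‖u x - v x‖ ≤ ε * (‖u x‖ + ‖v x‖)) :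
    ∀ ε > (0 : ℝ), ∃ δ > (0 : ℝ), ∀ x : EuclideanSpace ℝ (Fin n),
      ‖x‖ < r₀ → ‖x‖ < δ → ‖g (u x) - g (v x)‖ ≤ ε * (‖g (u x)‖ + ‖g (v x)‖) := by
  intro ε hε
  have hη := hη_mono.monotoneOn
  obtain ⟨t, ht, hηt⟩ := hη.exists_pos_map_eq_of_surjOn_Ici hη_bij.mapsTo hη_bij.surjOn hε
  obtain ⟨δ, hδ, huvδ⟩ := huv (t / 2) (half_pos ht)
  exact ⟨δ, hδ, fun x hxr hxδ =>
    IsQuasisymmetricWith.norm_sub_le hqs hg0 hη ht.le hηt.le hε.le (huvδ x hxr hxδ)⟩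

/-- Post-composition half of Lemma 3.1: if `g : ℝⁿ → ℝⁿ` is `η`-quasisymmetric with
`g(0) = 0` (where `η` is an increasing homeomorphism of `[0,∞)` onto itself), and
`u, v : B(0, r₀) → ℝⁿ` satisfy `u(x) → 0`, `v(x) → 0` and `u ∼ v` as `x → 0`, then
`g ∘ u ∼ g ∘ v` as `x → 0`. -/
theorem qs_comp_left_sim {n : ℕ} (r₀ : ℝ) (hr₀ : 0 < r₀)
    (η : ℝ → ℝ)
    (hη_mono : StrictMonoOn η (Set.Ici 0))
    (hη_cont : ContinuousOn η (Set.Ici 0))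
    (hη_bij : Set.BijOn η (Set.Ici 0) (Set.Ici 0))
    (g u v : EuclideanSpace ℝ (Fin n) → EuclideanSpace ℝ (Fin n))
    (hg0 : g 0 = 0)
    (hqs : ∀ x y z : EuclideanSpace ℝ (Fin n), x ≠ z →
      ‖g x - g y‖ ≤ η (‖x - y‖ / ‖x - z‖) * ‖g x - g z‖)
    (hu0 : Filter.Tendsto u (nhdsWithin 0 (Metric.ball (0 : EuclideanSpace ℝ (Fin n)) r₀)) (nhds 0))
    (hv0 : Filter.Tendsto v (nhdsWithin 0 (Metric.ball (0 : EuclideanSpace ℝ (Fin n)) r₀)) (nhds 0))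
    (huv : ∀ ε > (0 : ℝ), ∃ δ > (0 : ℝ), ∀ x : EuclideanSpace ℝ (Fin n),
      ‖x‖ < r₀ → ‖x‖ < δ → ‖u x - v x‖ ≤ ε * (‖u x‖ + ‖v x‖)) :
    ∀ ε > (0 : ℝ), ∃ δ > (0 : ℝ), ∀ x : EuclideanSpace ℝ (Fin n),
      ‖x‖ < r₀ → ‖x‖ < δ → ‖g (u x) - g (v x)‖ ≤ ε * (‖g (u x)‖ + ‖g (v x)‖) :=
  qs_comp_left_sim_general r₀ η hη_mono hη_bij g u v hg0 hqs huv
end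

section
/- Let g : ℝⁿ → ℝⁿ be a homeomorphism with g(0) = 0 such that g(r·x) = r^d · g(x) for all r > 0 and all x ∈ ℝⁿ, where d > 0. If U ⊆ ℝⁿ is starlike with respect to 0 (i.e. for every y ∈ U the segment from 0 to y is contained in U), then the image g(U) is starlike with respect to 0. -/
open Set

/-- Lemma 3.4: if `g : ℝⁿ → ℝⁿ` is a homeomorphism fixing `0` which is `d`-homogeneous
(`g(r·x) = r^d·g(x)` for all `r > 0`, `d > 0`), and `U ⊆ ℝⁿ` is starlike with respect
to `0`, then `g(U)` is starlike with respect to `0`. -/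
theorem homogeneous_image_starlike {n : ℕ} (d : ℝ) (hd : 0 < d)
    (g : EuclideanSpace ℝ (Fin n) ≃ₜ EuclideanSpace ℝ (Fin n))
    (hg0 : g 0 = 0)
    (hhom : ∀ r : ℝ, 0 < r → ∀ x : EuclideanSpace ℝ (Fin n), g (r • x) = (r ^ d) • g x)
    (U : Set (EuclideanSpace ℝ (Fin n)))
    (hU : ∀ y ∈ U, ∀ t ∈ Set.Icc (0 : ℝ) 1, t • y ∈ U) :
    ∀ y ∈ (⇑g '' U), ∀ t ∈ Set.Icc (0 : ℝ) 1, t • y ∈ (⇑g '' U) := by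
  rintro y ⟨x, hx, rfl⟩ t ⟨ht0, ht1⟩
  rcases eq_or_lt_of_le ht0 with h | h
  · refine ⟨0, ?_, ?_⟩
    · have := hU x hx 0 ⟨le_refl 0, zero_le_one⟩
      simpa using this
    · rw [hg0, ← h, zero_smul]
  · set s := t ^ (1/d) with hs
    have hspos : 0 < s := Real.rpow_pos_of_pos h _
    have hs1 : s ≤ 1 := Real.rpow_le_one ht0 ht1 (by positivity)
    refine ⟨s • x, hU x hx s ⟨hspos.le, hs1⟩, ?_⟩
    rw [hhom s hspos, hs, ← Real.rpow_mul ht0, one_div, inv_mul_cancel₀ hd.ne',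
      Real.rpow_one]
end

section
/- Let p, h : B(0, r₀) → ℝⁿ with p(0) = h(0) = 0 and p ∼ h as x → 0, and let r_p, r_h : (0, t₀) → (0, ∞) be positive functions with r_p(t)/r_h(t) → 1 as t → 0⁺. Then for every fixed x ∈ ℝⁿ, |p(tx)/r_p(t) − h(tx)/r_h(t)| = o(|p(tx)|/r_p(t) + |h(tx)|/r_h(t)) as t → 0⁺; that is, for every ε > 0 there is δ > 0 such that for all 0 < t < δ, |p(tx)/r_p(t) − h(tx)/r_h(t)| ≤ ε(|p(tx)|/r_p(t) + |h(tx)|/r_h(t)). -/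
open Filter Topology

/-- The central estimate in Lemma 3.5: if `p, h : B(0, r₀) → ℝⁿ` fix `0`, `p ∼ h` as
`x → 0`, and `r_p, r_h : (0, t₀) → (0, ∞)` satisfy `r_p(t)/r_h(t) → 1` as `t → 0⁺`, then
for every fixed `x`, `|p(tx)/r_p(t) − h(tx)/r_h(t)| = o(|p(tx)|/r_p(t) + |h(tx)|/r_h(t))`
as `t → 0⁺`. -/
theorem normalized_sim {n : ℕ} (r₀ t₀ : ℝ) (hr₀ : 0 < r₀) (ht₀ : 0 < t₀)
    (p h : EuclideanSpace ℝ (Fin n) → EuclideanSpace ℝ (Fin n))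
    (hp0 : p 0 = 0) (hh0 : h 0 = 0)
    (hsim : ∀ ε > (0 : ℝ), ∃ δ > (0 : ℝ), ∀ x : EuclideanSpace ℝ (Fin n),
      ‖x‖ < r₀ → ‖x‖ < δ → ‖p x - h x‖ ≤ ε * (‖p x‖ + ‖h x‖))
    (rp rh : ℝ → ℝ)
    (hrp_pos : ∀ t : ℝ, 0 < t → t < t₀ → 0 < rp t)
    (hrh_pos : ∀ t : ℝ, 0 < t → t < t₀ → 0 < rh t)
    (hratio : Filter.Tendsto (fun t => rp t / rh t) (nhdsWithin 0 (Set.Ioi 0)) (nhds 1)) :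
    ∀ x : EuclideanSpace ℝ (Fin n), ∀ ε > (0 : ℝ), ∃ δ > (0 : ℝ), ∀ t : ℝ, 0 < t → t < δ →
      ‖(rp t)⁻¹ • p (t • x) - (rh t)⁻¹ • h (t • x)‖ ≤
        ε * ((rp t)⁻¹ * ‖p (t • x)‖ + (rh t)⁻¹ * ‖h (t • x)‖) := by
  intro x ε hε
  obtain ⟨δs, hδs, hs⟩ := hsim (ε / 4) (by linarith)
  have hinv : Tendsto (fun t => (rp t / rh t)⁻¹) (nhdsWithin 0 (Set.Ioi 0)) (nhds 1) := by
    simpa using hratio.inv₀ one_ne_zero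
  have hev := Metric.tendsto_nhds.mp hinv (min (ε / 2) 1) (by positivity)
  rw [eventually_iff, Metric.mem_nhdsWithin_iff] at hev
  obtain ⟨δ₁, hδ₁, hsub⟩ := hev
  refine ⟨min δ₁ (min t₀ (min (r₀ / (‖x‖ + 1)) (δs / (‖x‖ + 1)))), by positivity, ?_⟩
  intro t ht htδ
  have hx1 : (0 : ℝ) < ‖x‖ + 1 := by positivity
  have htt₀ : t < t₀ := lt_of_lt_of_le htδ (le_trans (min_le_right _ _) (min_le_left _ _))
  have htr₀ : t < r₀ / (‖x‖ + 1) := lt_of_lt_of_le htδ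
    (le_trans (min_le_right _ _) (le_trans (min_le_right _ _) (min_le_left _ _)))
  have htδs : t < δs / (‖x‖ + 1) := lt_of_lt_of_le htδ
    (le_trans (min_le_right _ _) (le_trans (min_le_right _ _) (min_le_right _ _)))
  have hnx : ‖t • x‖ = t * ‖x‖ := by
    rw [norm_smul, Real.norm_eq_abs, abs_of_pos ht]
  have hbr₀ : ‖t • x‖ < r₀ := by
    rw [hnx]
    have : t * (‖x‖ + 1) < r₀ := (lt_div_iff₀ hx1).mp htr₀
    nlinarith
  have hbδs : ‖t • x‖ < δs := by
    rw [hnx]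
    have : t * (‖x‖ + 1) < δs := (lt_div_iff₀ hx1).mp htδs
    nlinarith
  have hPH := hs (t • x) hbr₀ hbδs
  have hA : 0 < rp t := hrp_pos t ht htt₀
  have hB : 0 < rh t := hrh_pos t ht htt₀
  have hP : t ∈ {t : ℝ | dist ((rp t / rh t)⁻¹) 1 < min (ε / 2) 1} := by
    apply hsub
    constructor
    · simp [Real.dist_eq, abs_of_pos ht]
      exact lt_of_lt_of_le htδ (min_le_left _ _)
    · exact ht
  have hPd : |(rh t / rp t) - 1| < min (ε / 2) 1 := by
    have := hP
    rwa [Set.mem_setOf_eq, Real.dist_eq, inv_div] at this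
  have hrat1 : |(rh t / rp t) - 1| ≤ ε / 2 := le_of_lt (lt_of_lt_of_le hPd (min_le_left _ _))
  have hrat2 : rh t / rp t ≤ 2 := by
    have h1 : (rh t / rp t) - 1 < 1 := lt_of_le_of_lt (le_abs_self _) (lt_of_lt_of_le hPd (min_le_right _ _))
    linarith
  set P := p (t • x)
  set H := h (t • x)
  set a := ‖P‖
  set b := ‖H‖
  have ha : 0 ≤ a := norm_nonneg _
  have hb : 0 ≤ b := norm_nonneg _
  have hAinv : 0 < (rp t)⁻¹ := inv_pos.mpr hA
  have hBinv : 0 < (rh t)⁻¹ := inv_pos.mpr hB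
  have hsplit : (rp t)⁻¹ • P - (rh t)⁻¹ • H =
      (rp t)⁻¹ • (P - H) + ((rp t)⁻¹ - (rh t)⁻¹) • H := by
    rw [smul_sub, sub_smul]; abel
  have hdiff : (rp t)⁻¹ - (rh t)⁻¹ = (rh t / rp t - 1) * (rh t)⁻¹ := by
    field_simp
  have key : ‖(rp t)⁻¹ • P - (rh t)⁻¹ • H‖ ≤
      (rp t)⁻¹ * ‖P - H‖ + |rh t / rp t - 1| * ((rh t)⁻¹ * b) := by
    rw [hsplit]
    calc ‖(rp t)⁻¹ • (P - H) + ((rp t)⁻¹ - (rh t)⁻¹) • H‖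
        ≤ ‖(rp t)⁻¹ • (P - H)‖ + ‖((rp t)⁻¹ - (rh t)⁻¹) • H‖ := norm_add_le _ _
      _ = (rp t)⁻¹ * ‖P - H‖ + |rh t / rp t - 1| * ((rh t)⁻¹ * b) := by
          rw [norm_smul, norm_smul, Real.norm_eq_abs, Real.norm_eq_abs,
            abs_of_pos hAinv, hdiff, abs_mul, abs_of_pos hBinv, mul_assoc]
  have hAi2B : (rp t)⁻¹ ≤ 2 * (rh t)⁻¹ := by
    rw [div_le_iff₀ hA] at hrat2
    rw [inv_le_iff_one_le_mul₀' hA]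
    calc (1 : ℝ) = (rh t)⁻¹ * rh t := (inv_mul_cancel₀ hB.ne').symm
      _ ≤ (rh t)⁻¹ * (2 * rp t) := by
          exact mul_le_mul_of_nonneg_left hrat2 hBinv.le
      _ = rp t * (2 * (rh t)⁻¹) := by ring
  refine le_trans key ?_
  have h1 : (rp t)⁻¹ * ‖P - H‖ ≤ (rp t)⁻¹ * (ε / 4 * (a + b)) :=
    mul_le_mul_of_nonneg_left hPH hAinv.le
  have h2 : |rh t / rp t - 1| * ((rh t)⁻¹ * b) ≤ (ε / 2) * ((rh t)⁻¹ * b) :=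
    mul_le_mul_of_nonneg_right hrat1 (mul_nonneg hBinv.le hb)
  have h3 : (rp t)⁻¹ * (ε / 4 * b) ≤ 2 * (rh t)⁻¹ * (ε / 4 * b) :=
    mul_le_mul_of_nonneg_right hAi2B (by positivity)
  nlinarith [mul_nonneg hAinv.le ha, mul_nonneg hBinv.le hb]
end

section
/- Let U, V ⊆ ℝⁿ be open neighbourhoods of 0, let f : U → V be a homeomorphism with f(0) = 0 such that its inverse f⁻¹ : V → U is η-quasisymmetric, and let D : U → D(U) be a homeomorphism with D(0) = 0 whose image D(U) is a neighbourhood of 0. If f ∼ D as x → 0, then f⁻¹ ∼ D⁻¹ as y → 0; that is, for every ε > 0 there is δ > 0 such that |f⁻¹(y) − D⁻¹(y)| ≤ ε(|f⁻¹(y)| + |D⁻¹(y)|) whenever |y| < δ. -/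
open Filter Topology Set

/-!
Write `x = D⁻¹ y`. Since `f ∼ D`, the point `f x` differs from `y = D x` by `o(|y|)`.
Quasisymmetry of `f⁻¹` applied to the triple `y, f x, 0` bounds `|f⁻¹ y - x|` by
`η(|y - f x| / |y|) · |f⁻¹ y|`, and `η(t) → 0` as `t → 0⁺`.
-/

variable {α E F : Type*} [NormedAddCommGroup E] [NormedAddCommGroup F]

theorem tendsto_nhdsGE_zero_of_monotoneOn_of_surjOn {η : ℝ → ℝ} (hmono : MonotoneOn η (Ici 0))
    (hmaps : MapsTo η (Ici 0) (Ici 0)) (hsurj : SurjOn η (Ici 0) (Ici 0)) :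
    Tendsto η (𝓝[≥] 0) (𝓝 0) := by
  have hη0 : η 0 ≤ 0 := by
    obtain ⟨t, ht, hηt⟩ := hsurj (self_mem_Ici : (0 : ℝ) ∈ Ici 0)
    exact hηt ▸ hmono self_mem_Ici ht ht
  refine tendsto_order.2 ⟨fun a ha => ?_, fun a ha => ?_⟩
  · filter_upwards [self_mem_nhdsWithin] with t ht using ha.trans_le (hmaps ht)
  · obtain ⟨r, hr, hηr⟩ := hsurj (show a / 2 ∈ Ici 0 from mem_Ici.2 (by positivity))
    have hr_pos : 0 < r := lt_of_le_of_ne hr (by rintro rfl; linarith)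
    filter_upwards [Ico_mem_nhdsGE hr_pos] with t ht
    linarith [hmono ht.1 hr ht.2.le]

namespace Asymptotics

theorem isEquivalent_of_forall_eventually_norm_sub_le {l : Filter α} {u v : α → E}
    (h : ∀ ε > 0, ∀ᶠ x in l, ‖u x - v x‖ ≤ ε * (‖u x‖ + ‖v x‖)) : u ~[l] v := by
  refine IsLittleO.of_bound fun c hc => ?_
  set m := min (c / 4) (1 / 2)
  have hm : 0 < m := by positivity
  filter_upwards [h m hm] with x hx
  have hu : ‖u x‖ ≤ ‖v x‖ + ‖u x - v x‖ := norm_le_norm_add_norm_sub' (u x) (v x)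
  have hm_c : m ≤ c / 4 := min_le_left _ _
  have hm_half : m ≤ 1 / 2 := min_le_right _ _
  simp only [Pi.sub_apply]
  -- `‖u - v‖ ≤ m (2‖v‖ + ‖u - v‖)` with `m ≤ 1/2` gives `‖u - v‖ ≤ 4m‖v‖`.
  nlinarith [mul_le_mul_of_nonneg_left hu hm.le,
    mul_nonneg (sub_nonneg.2 hm_half) (norm_nonneg (u x - v x)),
    mul_nonneg (sub_nonneg.2 hm_c) (norm_nonneg (v x))]

theorem IsEquivalent.eventually_norm_sub_le {l : Filter α} {u v : α → E} (h : u ~[l] v)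
    {ε : ℝ} (hε : 0 < ε) : ∀ᶠ x in l, ‖u x - v x‖ ≤ ε * (‖u x‖ + ‖v x‖) := by
  filter_upwards [h.isLittleO.bound hε] with x hx
  simp only [Pi.sub_apply] at hx
  nlinarith [mul_nonneg hε.le (norm_nonneg (u x))]

end Asymptotics

open Asymptotics

def IsQuasisymmetricOn (η : ℝ → ℝ) (g : E → F) (V : Set E) : Prop :=
  ∀ x y z, x ∈ V → y ∈ V → z ∈ V → x ≠ z →
    ‖g x - g y‖ ≤ η (‖x - y‖ / ‖x - z‖) * ‖g x - g z‖

theorem IsQuasisymmetricOn.isEquivalent_comp {η : ℝ → ℝ} {g : E → F} {V : Set E}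
    (hg : IsQuasisymmetricOn η g V) (hη : Tendsto η (𝓝[≥] 0) (𝓝 0)) (hV : V ∈ 𝓝 0)
    (hg0 : g 0 = 0) {φ : E → E} (hφ : φ ~[𝓝 0] id) : (g ∘ φ) ~[𝓝 0] g := by
  have hφ0 : φ 0 = 0 := by
    simpa using (hφ.isLittleO.bound one_pos).self_of_nhds
  have hφV : ∀ᶠ y in 𝓝 0, φ y ∈ V := (hφ.symm.tendsto_nhds tendsto_id) hV
  have hratio : Tendsto (fun y => ‖φ y - y‖ / ‖y‖) (𝓝 0) (𝓝[≥] 0) :=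
    tendsto_nhdsWithin_iff.2
      ⟨hφ.isLittleO.norm_norm.tendsto_div_nhds_zero,
        Eventually.of_forall fun _ => div_nonneg (norm_nonneg _) (norm_nonneg _)⟩
  refine IsLittleO.of_bound fun c hc => ?_
  filter_upwards [hV, hφV, (hη.comp hratio).eventually (Iic_mem_nhds hc)] with y hy hφy hηy
  rcases eq_or_ne y 0 with rfl | hy0
  · simp [hφ0, hg0]
  calc ‖g (φ y) - g y‖ = ‖g y - g (φ y)‖ := norm_sub_rev _ _
    _ ≤ η (‖y - φ y‖ / ‖y - 0‖) * ‖g y - g 0‖ := hg y (φ y) 0 hy hφy (mem_of_mem_nhds hV) hy0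
    _ ≤ c * ‖g y‖ := by
      rw [sub_zero, hg0, sub_zero, norm_sub_rev]
      exact mul_le_mul_of_nonneg_right hηy (norm_nonneg _)

theorem inverse_sim_general {n : ℕ} (η : ℝ → ℝ)
    (hη_mono : StrictMonoOn η (Set.Ici 0))
    (hη_bij : Set.BijOn η (Set.Ici 0) (Set.Ici 0))
    (U V W : Set (EuclideanSpace ℝ (Fin n)))
    (hV : IsOpen V)
    (h0U : (0 : EuclideanSpace ℝ (Fin n)) ∈ U) (h0V : (0 : EuclideanSpace ℝ (Fin n)) ∈ V)
    (f finv D Dinv : EuclideanSpace ℝ (Fin n) → EuclideanSpace ℝ (Fin n))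
    (hf0 : f 0 = 0)
    (hfinv_left : ∀ x ∈ U, finv (f x) = x)
    (hqs : ∀ x y z, x ∈ V → y ∈ V → z ∈ V → x ≠ z →
      ‖finv x - finv y‖ ≤ η (‖x - y‖ / ‖x - z‖) * ‖finv x - finv z‖)
    (hD0 : D 0 = 0)
    (hW : W = D '' U) (hWnbhd : W ∈ nhds (0 : EuclideanSpace ℝ (Fin n)))
    (hDinv_left : ∀ x ∈ U, Dinv (D x) = x) (hDinv_right : ∀ y ∈ W, D (Dinv y) = y)
    (hDinv_cont : ContinuousOn Dinv W)
    (hsim : ∀ ε > (0 : ℝ), ∃ δ > (0 : ℝ), ∀ x ∈ U, ‖x‖ < δ →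
      ‖f x - D x‖ ≤ ε * (‖f x‖ + ‖D x‖)) :
    ∀ ε > (0 : ℝ), ∃ δ > (0 : ℝ), ∀ y : EuclideanSpace ℝ (Fin n), ‖y‖ < δ →
      ‖finv y - Dinv y‖ ≤ ε * (‖finv y‖ + ‖Dinv y‖) := by
  subst hW
  have hfinv0 : finv 0 = 0 := by simpa [hf0] using hfinv_left 0 h0U
  have hDinv0 : Dinv 0 = 0 := by simpa [hD0] using hDinv_left 0 h0U
  have hDinvU : ∀ y ∈ D '' U, Dinv y ∈ U := by
    rintro _ ⟨x, hx, rfl⟩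
    rwa [hDinv_left x hx]
  have hDinv_cont0 : Tendsto Dinv (𝓝 0) (𝓝 0) := by
    simpa only [hDinv0] using (hDinv_cont.continuousAt hWnbhd).tendsto
  have hDinv_tendsto : Tendsto Dinv (𝓝 0) (𝓝[U] 0) :=
    tendsto_nhdsWithin_iff.2 ⟨hDinv_cont0, eventually_of_mem hWnbhd hDinvU⟩
  have hfD : f ~[𝓝[U] 0] D := isEquivalent_of_forall_eventually_norm_sub_le fun ε hε => by
    obtain ⟨δ, hδ, h⟩ := hsim ε hε
    filter_upwards [self_mem_nhdsWithin, nhdsWithin_le_nhds (Metric.ball_mem_nhds 0 hδ)]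
      with x hxU hx
    exact h x hxU (mem_ball_zero_iff.1 hx)
  have hfDinv : (f ∘ Dinv) ~[𝓝 0] id :=
    (hfD.comp_tendsto hDinv_tendsto).congr_right (eventually_of_mem hWnbhd hDinv_right)
  have hη : Tendsto η (𝓝[≥] 0) (𝓝 0) := tendsto_nhdsGE_zero_of_monotoneOn_of_surjOn
    hη_mono.monotoneOn hη_bij.mapsTo hη_bij.surjOn
  have hfinv_qs : IsQuasisymmetricOn η finv V := hqs
  have hDinv_finv : Dinv ~[𝓝 0] finv :=
    (hfinv_qs.isEquivalent_comp hη (hV.mem_nhds h0V) hfinv0 hfDinv).congr_left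
      (eventually_of_mem hWnbhd fun y hy => hfinv_left _ (hDinvU y hy))
  intro ε hε
  obtain ⟨δ, hδ, h⟩ := Metric.eventually_nhds_iff.1
    (hDinv_finv.symm.eventually_norm_sub_le hε)
  exact ⟨δ, hδ, fun y hy => h (by rwa [dist_zero_right])⟩

/-- Lemma 3.6: let `f : U → V` be a homeomorphism between neighbourhoods of `0` with
`f(0) = 0` whose inverse is `η`-quasisymmetric, and let `D : U → D(U)` be a homeomorphism
with `D(0) = 0` whose image is a neighbourhood of `0`. If `f ∼ D` as `x → 0`, then
`f⁻¹ ∼ D⁻¹` as `y → 0`. -/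
theorem inverse_sim {n : ℕ} (η : ℝ → ℝ)
    (hη_mono : StrictMonoOn η (Set.Ici 0))
    (hη_cont : ContinuousOn η (Set.Ici 0))
    (hη_bij : Set.BijOn η (Set.Ici 0) (Set.Ici 0))
    (U V W : Set (EuclideanSpace ℝ (Fin n)))
    (hU : IsOpen U) (hV : IsOpen V)
    (h0U : (0 : EuclideanSpace ℝ (Fin n)) ∈ U) (h0V : (0 : EuclideanSpace ℝ (Fin n)) ∈ V)
    (f finv D Dinv : EuclideanSpace ℝ (Fin n) → EuclideanSpace ℝ (Fin n))
    (hf0 : f 0 = 0) (hfUV : f '' U = V)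
    (hf_cont : ContinuousOn f U) (hf_inj : Set.InjOn f U)
    (hfinv_left : ∀ x ∈ U, finv (f x) = x) (hfinv_right : ∀ y ∈ V, f (finv y) = y)
    (hfinv_cont : ContinuousOn finv V)
    (hqs : ∀ x y z, x ∈ V → y ∈ V → z ∈ V → x ≠ z →
      ‖finv x - finv y‖ ≤ η (‖x - y‖ / ‖x - z‖) * ‖finv x - finv z‖)
    (hD0 : D 0 = 0) (hD_cont : ContinuousOn D U) (hD_inj : Set.InjOn D U)
    (hW : W = D '' U) (hWnbhd : W ∈ nhds (0 : EuclideanSpace ℝ (Fin n)))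
    (hDinv_left : ∀ x ∈ U, Dinv (D x) = x) (hDinv_right : ∀ y ∈ W, D (Dinv y) = y)
    (hDinv_cont : ContinuousOn Dinv W)
    (hsim : ∀ ε > (0 : ℝ), ∃ δ > (0 : ℝ), ∀ x ∈ U, ‖x‖ < δ →
      ‖f x - D x‖ ≤ ε * (‖f x‖ + ‖D x‖)) :
    ∀ ε > (0 : ℝ), ∃ δ > (0 : ℝ), ∀ y : EuclideanSpace ℝ (Fin n), ‖y‖ < δ →
      ‖finv y - Dinv y‖ ≤ ε * (‖finv y‖ + ‖Dinv y‖) :=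
  inverse_sim_general η hη_mono hη_bij U V W hV h0U h0V f finv D Dinv hf0 hfinv_left hqs hD0 hW
    hWnbhd hDinv_left hDinv_right hDinv_cont hsim
end

section
/- Let f, h : ℝⁿ → ℝⁿ with f(0) = h(0) = 0, let ρ_f, ρ_h : (0, ∞) → (0, ∞) with ρ_h(t) → 0 as t → 0⁺, and let g_f, g_h : ℝⁿ → ℝⁿ be continuous. Suppose that f(t·x)/ρ_f(t) → g_f(x) locally uniformly in x ∈ ℝⁿ as t → 0⁺ (i.e. for every compact K ⊆ ℝⁿ, sup_{x∈K} |f(t·x)/ρ_f(t) − g_f(x)| → 0 as t → 0⁺), and similarly h(t·x)/ρ_h(t) → g_h(x) locally uniformly as t → 0⁺. Then (f ∘ h)(t·x)/ρ_f(ρ_h(t)) → g_f(g_h(x)) locally uniformly in x ∈ ℝⁿ as t → 0⁺. -/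
open Filter Topology

/-- The asymptotic chain rule from the proof of Theorem 1.2: if `f, h : ℝⁿ → ℝⁿ` fix `0`,
`ρ_f, ρ_h : (0,∞) → (0,∞)` with `ρ_h(t) → 0` as `t → 0⁺`, `g_f, g_h` are continuous, and
`f(t·x)/ρ_f(t) → g_f(x)` and `h(t·x)/ρ_h(t) → g_h(x)` locally uniformly as `t → 0⁺`,
then `(f ∘ h)(t·x)/ρ_f(ρ_h(t)) → g_f(g_h(x))` locally uniformly as `t → 0⁺`. -/
theorem chain_rule_asymp {n : ℕ}
    (f h : EuclideanSpace ℝ (Fin n) → EuclideanSpace ℝ (Fin n))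
    (hf0 : f 0 = 0) (hh0 : h 0 = 0)
    (ρf ρh : ℝ → ℝ)
    (hρf_pos : ∀ t : ℝ, 0 < t → 0 < ρf t)
    (hρh_pos : ∀ t : ℝ, 0 < t → 0 < ρh t)
    (hρh0 : Filter.Tendsto ρh (nhdsWithin 0 (Set.Ioi 0)) (nhds 0))
    (gf gh : EuclideanSpace ℝ (Fin n) → EuclideanSpace ℝ (Fin n))
    (hgf_cont : Continuous gf) (hgh_cont : Continuous gh)
    (hf_conv : TendstoLocallyUniformly
      (fun (t : ℝ) (x : EuclideanSpace ℝ (Fin n)) => (ρf t)⁻¹ • f (t • x)) gf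
      (nhdsWithin 0 (Set.Ioi 0)))
    (hh_conv : TendstoLocallyUniformly
      (fun (t : ℝ) (x : EuclideanSpace ℝ (Fin n)) => (ρh t)⁻¹ • h (t • x)) gh
      (nhdsWithin 0 (Set.Ioi 0))) :
    TendstoLocallyUniformly
      (fun (t : ℝ) (x : EuclideanSpace ℝ (Fin n)) => (ρf (ρh t))⁻¹ • f (h (t • x)))
      (fun x => gf (gh x)) (nhdsWithin 0 (Set.Ioi 0)) := by
  rw [tendstoLocallyUniformly_iff_forall_isCompact]
  intro K hK
  rw [Metric.tendstoUniformlyOn_iff]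
  intro ε hε
  have hρh_pos' : ∀ᶠ t in nhdsWithin 0 (Set.Ioi 0), 0 < ρh t :=
    eventually_nhdsWithin_of_forall (fun t ht => hρh_pos t ht)
  have hρh_tendsto : Tendsto ρh (nhdsWithin 0 (Set.Ioi 0)) (nhdsWithin 0 (Set.Ioi 0)) :=
    tendsto_nhdsWithin_iff.mpr ⟨hρh0, hρh_pos'⟩
  set L := gh '' K with hL
  have hLc : IsCompact L := hK.image hgh_cont
  set L' := Metric.cthickening 1 L with hL'
  have hL'c : IsCompact L' := hLc.cthickening
  have hL'sub : L ⊆ L' := Metric.self_subset_cthickening L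
  have hgf_uc : UniformContinuousOn gf L' :=
    hL'c.uniformContinuousOn_of_continuous hgf_cont.continuousOn
  obtain ⟨δ, hδpos, hδ⟩ := Metric.uniformContinuousOn_iff.mp hgf_uc (ε/2) (by positivity)
  set δ' := min δ 1 with hδ'def
  have hδ'pos : 0 < δ' := lt_min hδpos one_pos
  have hf_unif : TendstoUniformlyOn (fun t x => (ρf t)⁻¹ • f (t • x)) gf
      (nhdsWithin 0 (Set.Ioi 0)) L' :=
    (tendstoLocallyUniformly_iff_forall_isCompact.mp hf_conv) L' hL'c
  have hf_ev := Metric.tendstoUniformlyOn_iff.mp hf_unif (ε/2) (by positivity)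
  have hf_ev' : ∀ᶠ t in nhdsWithin 0 (Set.Ioi 0),
      ∀ y ∈ L', dist (gf y) ((ρf (ρh t))⁻¹ • f (ρh t • y)) < ε/2 :=
    hρh_tendsto.eventually hf_ev
  have hh_unif : TendstoUniformlyOn (fun t x => (ρh t)⁻¹ • h (t • x)) gh
      (nhdsWithin 0 (Set.Ioi 0)) K :=
    (tendstoLocallyUniformly_iff_forall_isCompact.mp hh_conv) K hK
  have hh_ev := Metric.tendstoUniformlyOn_iff.mp hh_unif δ' hδ'pos
  filter_upwards [hf_ev', hh_ev, hρh_pos'] with t hft hht hpt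
  intro x hx
  set y := (ρh t)⁻¹ • h (t • x) with hy
  have hdy : dist (gh x) y < δ' := hht x hx
  have hyL' : y ∈ L' := by
    apply Metric.thickening_subset_cthickening (δ := 1) L
    exact Metric.mem_thickening_iff.mpr
      ⟨gh x, ⟨x, hx, rfl⟩, by rw [dist_comm]; exact lt_of_lt_of_le hdy (min_le_right _ _)⟩
  have key : ρh t • y = h (t • x) := by
    rw [hy, smul_smul, mul_inv_cancel₀ (ne_of_gt hpt), one_smul]
  calc dist (gf (gh x)) ((ρf (ρh t))⁻¹ • f (h (t • x)))
      ≤ dist (gf (gh x)) (gf y) + dist (gf y) ((ρf (ρh t))⁻¹ • f (h (t • x))) :=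
        dist_triangle _ _ _
    _ < ε/2 + ε/2 := by
        apply add_lt_add
        · exact hδ _ (hL'sub ⟨x, hx, rfl⟩) _ hyL'
            (lt_of_lt_of_le hdy (min_le_left _ _))
        · rw [← key]; exact hft y hyL'
    _ = ε := add_halves ε
end

section
/- Let n ≥ 1, λ > 1, d > 0, x₀ ∈ ℝⁿ. Let U ⊆ ℝⁿ be an open neighbourhood of 0 and L : U → L(U) a homeomorphism onto an open neighbourhood of x₀ with L(0) = x₀. Let ρ : (0,∞) → (0,∞) satisfy ρ(λt)/ρ(t) → λ^d as t → 0⁺, and let g : ℝⁿ∖{0} → ℝⁿ be continuous with g(u) ≠ 0 for all |u| = 1. Suppose L has the asymptotic representation |L(x) − x₀ − ρ(|x|)·g(x/|x|)| = o(ρ(|x|)) as x → 0 (x ≠ 0). Then the map f defined near x₀ by f(x) = L(λ·L⁻¹(x)) is differentiable at x₀ with derivative f'(x₀) = λ^d · Id; that is, f(x) = x₀ + λ^d(x − x₀) + o(|x − x₀|) as x → x₀. -/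
open Filter Topology Set

set_option maxHeartbeats 2000000 in
/-- Theorem 1.1 in concrete asymptotic form: if `L` is a homeomorphism from a
neighbourhood `U` of `0` onto a neighbourhood of `x₀` with `L(0) = x₀`, admitting the
asymptotic representation `L(x) − x₀ ∼ ρ(|x|)·g(x/|x|)` as `x → 0` where
`ρ(λt)/ρ(t) → λ^d` as `t → 0⁺` and `g` is continuous away from `0` and nonvanishing on
the unit sphere, then `f(x) = L(λ·L⁻¹(x))` is differentiable at `x₀` with
`f'(x₀) = λ^d·Id`. -/
theorem schroder_differentiable {n : ℕ} (hn : 1 ≤ n) (lam d : ℝ)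
    (hlam : 1 < lam) (hd : 0 < d)
    (x₀ : EuclideanSpace ℝ (Fin n)) (U : Set (EuclideanSpace ℝ (Fin n)))
    (hU_open : IsOpen U) (h0U : (0 : EuclideanSpace ℝ (Fin n)) ∈ U)
    (L Linv : EuclideanSpace ℝ (Fin n) → EuclideanSpace ℝ (Fin n))
    (hL0 : L 0 = x₀)
    (hLU_open : IsOpen (L '' U))
    (hL_cont : ContinuousOn L U) (hL_inj : Set.InjOn L U)
    (hLinv_left : ∀ x ∈ U, Linv (L x) = x) (hLinv_right : ∀ y ∈ L '' U, L (Linv y) = y)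
    (hLinv_cont : ContinuousOn Linv (L '' U))
    (ρ : ℝ → ℝ) (hρ_pos : ∀ t : ℝ, 0 < t → 0 < ρ t)
    (hρ_hom : Filter.Tendsto (fun t => ρ (lam * t) / ρ t)
      (nhdsWithin 0 (Set.Ioi 0)) (nhds (lam ^ d)))
    (g : EuclideanSpace ℝ (Fin n) → EuclideanSpace ℝ (Fin n))
    (hg_cont : ContinuousOn g {(0 : EuclideanSpace ℝ (Fin n))}ᶜ)
    (hg_ne : ∀ u : EuclideanSpace ℝ (Fin n), ‖u‖ = 1 → g u ≠ 0)
    (hasymp : ∀ ε > (0 : ℝ), ∃ δ > (0 : ℝ), ∀ x : EuclideanSpace ℝ (Fin n), x ≠ 0 → ‖x‖ < δ →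
      ‖L x - x₀ - ρ ‖x‖ • g (‖x‖⁻¹ • x)‖ ≤ ε * ρ ‖x‖) :
    ∀ ε > (0 : ℝ), ∃ δ > (0 : ℝ), ∀ x : EuclideanSpace ℝ (Fin n), ‖x - x₀‖ < δ →
      ‖L (lam • Linv x) - x₀ - (lam ^ d) • (x - x₀)‖ ≤ ε * ‖x - x₀‖ := by
  have hlam0 : (0:ℝ) < lam := lt_trans one_pos hlam
  have hld : (0:ℝ) < lam ^ d := Real.rpow_pos_of_pos hlam0 d
  intro ε hε
  -- compact sphere, min and max of ‖g‖
  have hsub : Metric.sphere (0 : EuclideanSpace ℝ (Fin n)) 1 ⊆ {(0 : EuclideanSpace ℝ (Fin n))}ᶜ := by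
    intro u hu
    rw [mem_sphere_zero_iff_norm] at hu
    simp only [Set.mem_compl_iff, Set.mem_singleton_iff]
    intro h
    rw [h, norm_zero] at hu
    norm_num at hu
  have hSne : (Metric.sphere (0 : EuclideanSpace ℝ (Fin n)) 1).Nonempty := by
    refine ⟨EuclideanSpace.single ⟨0, hn⟩ (1:ℝ), ?_⟩
    rw [mem_sphere_zero_iff_norm, EuclideanSpace.norm_single]
    norm_num
  have hgc : ContinuousOn (fun u => ‖g u‖) (Metric.sphere (0 : EuclideanSpace ℝ (Fin n)) 1) :=
    (hg_cont.mono hsub).norm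
  obtain ⟨u₀, hu₀S, hu₀min'⟩ :=
    (isCompact_sphere (0 : EuclideanSpace ℝ (Fin n)) 1).exists_isMinOn hSne hgc
  obtain ⟨u₁, hu₁S, hu₁max'⟩ :=
    (isCompact_sphere (0 : EuclideanSpace ℝ (Fin n)) 1).exists_isMaxOn hSne hgc
  have hu₀min : ∀ z ∈ Metric.sphere (0 : EuclideanSpace ℝ (Fin n)) 1, ‖g u₀‖ ≤ ‖g z‖ :=
    fun z hz => isMinOn_iff.mp hu₀min' z hz
  have hu₁max : ∀ z ∈ Metric.sphere (0 : EuclideanSpace ℝ (Fin n)) 1, ‖g z‖ ≤ ‖g u₁‖ :=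
    fun z hz => isMaxOn_iff.mp hu₁max' z hz
  set m := ‖g u₀‖ with hm
  set M := ‖g u₁‖ with hM
  have hm0 : 0 < m := norm_pos_iff.mpr (hg_ne u₀ (mem_sphere_zero_iff_norm.mp hu₀S))
  have hMm : m ≤ M := hu₀min u₁ hu₁S
  have hM0 : 0 < M := lt_of_lt_of_le hm0 hMm
  -- choose ε₁ ε₂
  set ε₁ := min (m/2) (ε*m/(4*(2*lam^d+1))) with hε₁def
  set ε₂ := min 1 (ε*m/(4*M)) with hε₂def
  have hε₁0 : 0 < ε₁ := lt_min (by positivity) (by positivity)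
  have hε₂0 : 0 < ε₂ := lt_min one_pos (by positivity)
  obtain ⟨δ₁, hδ₁, hA⟩ := hasymp ε₁ hε₁0
  obtain ⟨δ₂, hδ₂, hR⟩ := Metric.tendsto_nhdsWithin_nhds.mp hρ_hom ε₂ hε₂0
  set δ' := min (δ₁/lam) δ₂ with hδ'def
  have hδ'0 : 0 < δ' := lt_min (by positivity) hδ₂
  have hx₀mem : x₀ ∈ L '' U := ⟨0, h0U, hL0⟩
  have hcLinv : ContinuousAt Linv x₀ := hLinv_cont.continuousAt (hLU_open.mem_nhds hx₀mem)
  have hLinvx₀ : Linv x₀ = 0 := by rw [← hL0]; exact hLinv_left 0 h0U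
  obtain ⟨δ₃, hδ₃, hC⟩ := Metric.continuousAt_iff.mp hcLinv δ' hδ'0
  obtain ⟨δ₄, hδ₄, hball⟩ := Metric.isOpen_iff.mp hLU_open x₀ hx₀mem
  refine ⟨min δ₃ δ₄, lt_min hδ₃ hδ₄, fun x hx => ?_⟩
  by_cases hxx : x = x₀
  · subst hxx
    simp [hLinvx₀, hL0]
  · have hxU : x ∈ L '' U := hball (by
      rw [Metric.mem_ball, dist_eq_norm]
      exact lt_of_lt_of_le hx (min_le_right _ _))
    set y := Linv x with hy
    have hLy : L y = x := hLinv_right x hxU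
    have hy0 : y ≠ 0 := fun h => hxx (by rw [← hLy, h, hL0])
    have hty : ‖y‖ < δ' := by
      have := hC (x := x) (by rw [dist_eq_norm]; exact lt_of_lt_of_le hx (min_le_left _ _))
      rw [hLinvx₀, dist_eq_norm, sub_zero] at this
      exact this
    set t := ‖y‖ with ht
    have ht0 : 0 < t := norm_pos_iff.mpr hy0
    have htδ₂ : t < δ₂ := lt_of_lt_of_le hty (min_le_right _ _)
    have htlam : t < δ₁ / lam := lt_of_lt_of_le hty (min_le_left _ _)
    have hlt : lam * t < δ₁ := by
      rw [lt_div_iff₀ hlam0] at htlam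
      linarith [htlam]
    have htδ₁ : t < δ₁ := by
      have : t < lam * t := by nlinarith
      linarith
    set u := t⁻¹ • y with hu
    have huS : ‖u‖ = 1 := by
      rw [hu, norm_smul, Real.norm_eq_abs, abs_of_pos (inv_pos.mpr ht0), ← ht]
      exact inv_mul_cancel₀ ht0.ne'
    have husphere : u ∈ Metric.sphere (0 : EuclideanSpace ℝ (Fin n)) 1 :=
      mem_sphere_zero_iff_norm.mpr huS
    have h1 : ‖L y - x₀ - ρ t • g u‖ ≤ ε₁ * ρ t := hA y hy0 htδ₁
    rw [hLy] at h1
    have hnormly : ‖lam • y‖ = lam * t := by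
      rw [norm_smul, Real.norm_eq_abs, abs_of_pos hlam0]
    have hly0 : lam • y ≠ 0 := smul_ne_zero hlam0.ne' hy0
    have h2 : ‖L (lam • y) - x₀ - ρ (lam * t) • g u‖ ≤ ε₁ * ρ (lam * t) := by
      have := hA (lam • y) hly0 (by rw [hnormly]; exact hlt)
      rw [hnormly] at this
      have hdir : (lam * t)⁻¹ • (lam • y) = u := by
        rw [smul_smul, hu]
        congr 1
        field_simp
      rw [hdir] at this
      exact this
    have hρt : 0 < ρ t := hρ_pos t ht0
    have hρlt : 0 < ρ (lam * t) := hρ_pos _ (by positivity)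
    have hq : |ρ (lam * t) / ρ t - lam ^ d| < ε₂ := by
      have := hR (Set.mem_Ioi.mpr ht0) (by
        rw [Real.dist_eq, sub_zero, abs_of_pos ht0]; exact htδ₂)
      rw [Real.dist_eq] at this
      exact this
    have hq' : |ρ (lam * t) - lam ^ d * ρ t| ≤ ε₂ * ρ t := by
      have h' : |ρ (lam * t) / ρ t - lam ^ d| * ρ t ≤ ε₂ * ρ t :=
        mul_le_mul_of_nonneg_right hq.le hρt.le
      have heq : ρ (lam * t) - lam ^ d * ρ t = (ρ (lam * t) / ρ t - lam ^ d) * ρ t := by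
        rw [sub_mul, div_mul_cancel₀ _ hρt.ne']
      calc |ρ (lam * t) - lam ^ d * ρ t|
          = |ρ (lam * t) / ρ t - lam ^ d| * ρ t := by
            rw [heq, abs_mul, abs_of_pos hρt]
        _ ≤ ε₂ * ρ t := h'
    have hρub : ρ (lam * t) ≤ (lam ^ d + ε₂) * ρ t := by
      have h5 := (abs_le.mp hq').2
      have h6 : (lam ^ d + ε₂) * ρ t = lam ^ d * ρ t + ε₂ * ρ t := by ring
      linarith
    have hgum : m ≤ ‖g u‖ := hu₀min u husphere
    have hguM : ‖g u‖ ≤ M := hu₁max u husphere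
    have hε₁m : ε₁ ≤ m / 2 := min_le_left _ _
    have hε₁b : ε₁ ≤ ε * m / (4 * (2 * lam ^ d + 1)) := min_le_right _ _
    have hε₂1 : ε₂ ≤ 1 := min_le_left _ _
    have hε₂b : ε₂ ≤ ε * m / (4 * M) := min_le_right _ _
    clear_value m M ε₁ ε₂ t u y
    -- lower bound on ‖x - x₀‖
    have hlow : ρ t * (m / 2) ≤ ‖x - x₀‖ := by
      have hga : ρ t * m ≤ ‖ρ t • g u‖ := by
        rw [norm_smul, Real.norm_eq_abs, abs_of_pos hρt]
        exact mul_le_mul_of_nonneg_left hgum hρt.le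
      have htri : ‖ρ t • g u‖ - ‖x - x₀ - ρ t • g u‖ ≤ ‖x - x₀‖ := by
        have h3 := norm_sub_norm_le (ρ t • g u) (x - x₀)
        have h4 : ‖ρ t • g u - (x - x₀)‖ = ‖x - x₀ - ρ t • g u‖ := norm_sub_rev _ _
        linarith
      have h5 : ε₁ * ρ t ≤ m / 2 * ρ t := mul_le_mul_of_nonneg_right hε₁m hρt.le
      linarith
    -- decomposition
    have hdecomp : L (lam • y) - x₀ - lam ^ d • (x - x₀)
        = (L (lam • y) - x₀ - ρ (lam * t) • g u)
          + (ρ (lam * t) - lam ^ d * ρ t) • g u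
          + lam ^ d • (ρ t • g u - (x - x₀)) := by
      module
    have hmid : ‖(ρ (lam * t) - lam ^ d * ρ t) • g u‖ ≤ ε₂ * ρ t * M := by
      rw [norm_smul, Real.norm_eq_abs]
      calc |ρ (lam * t) - lam ^ d * ρ t| * ‖g u‖
          ≤ (ε₂ * ρ t) * M := by
            apply mul_le_mul hq' hguM (norm_nonneg _)
            positivity
        _ = ε₂ * ρ t * M := by ring
    have hlast : ‖lam ^ d • (ρ t • g u - (x - x₀))‖ ≤ lam ^ d * (ε₁ * ρ t) := by
      rw [norm_smul, Real.norm_eq_abs, abs_of_pos hld]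
      apply mul_le_mul_of_nonneg_left _ hld.le
      rw [norm_sub_rev]
      exact h1
    have hfirst : ‖L (lam • y) - x₀ - ρ (lam * t) • g u‖ ≤ ε₁ * ((lam ^ d + ε₂) * ρ t) := by
      refine le_trans h2 ?_
      exact mul_le_mul_of_nonneg_left hρub hε₁0.le
    have htotal : ‖L (lam • y) - x₀ - lam ^ d • (x - x₀)‖
        ≤ ε₁ * ((lam ^ d + ε₂) * ρ t) + ε₂ * ρ t * M + lam ^ d * (ε₁ * ρ t) := by
      rw [hdecomp]
      calc ‖(L (lam • y) - x₀ - ρ (lam * t) • g u)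
          + (ρ (lam * t) - lam ^ d * ρ t) • g u
          + lam ^ d • (ρ t • g u - (x - x₀))‖
          ≤ ‖L (lam • y) - x₀ - ρ (lam * t) • g u‖
            + ‖(ρ (lam * t) - lam ^ d * ρ t) • g u‖
            + ‖lam ^ d • (ρ t • g u - (x - x₀))‖ := norm_add₃_le
        _ ≤ _ := by gcongr
    -- final arithmetic
    have hsum : ε₁ * ((lam ^ d + ε₂) * ρ t) + ε₂ * ρ t * M + lam ^ d * (ε₁ * ρ t)
        ≤ ε * (ρ t * (m / 2)) := by
      have k1 : ε₂ * M ≤ ε * m / 4 := by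
        rw [le_div_iff₀ (by positivity : (0:ℝ) < 4 * M)] at hε₂b
        linarith
      have k2 : ε₁ * (lam ^ d + ε₂) + lam ^ d * ε₁ ≤ ε * m / 4 := by
        rw [le_div_iff₀ (by positivity : (0:ℝ) < 4 * (2 * lam ^ d + 1))] at hε₁b
        have k3 : ε₁ * ε₂ ≤ ε₁ * 1 := mul_le_mul_of_nonneg_left hε₂1 hε₁0.le
        nlinarith
      calc ε₁ * ((lam ^ d + ε₂) * ρ t) + ε₂ * ρ t * M + lam ^ d * (ε₁ * ρ t)
          = ρ t * (ε₁ * (lam ^ d + ε₂) + lam ^ d * ε₁) + ρ t * (ε₂ * M) := by ring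
        _ ≤ ρ t * (ε * m / 4) + ρ t * (ε * m / 4) :=
            add_le_add (mul_le_mul_of_nonneg_left k2 hρt.le)
              (mul_le_mul_of_nonneg_left k1 hρt.le)
        _ = ε * (ρ t * (m / 2)) := by ring
    calc ‖L (lam • y) - x₀ - lam ^ d • (x - x₀)‖
        ≤ ε * (ρ t * (m / 2)) := le_trans htotal hsum
      _ ≤ ε * ‖x - x₀‖ := mul_le_mul_of_nonneg_left hlow hε.le
end

section
/- Let M : ℝⁿ → ℝⁿ be an invertible linear map with operator norm ‖M⁻¹‖ ≤ δ for some δ < 1, and let A : ℝⁿ → ℝⁿ be continuous with C := sup_{x∈ℝⁿ} |A(x) − M(x)| < ∞. Then the maps ι_k := M^{−k} ∘ A^k converge uniformly on ℝⁿ to a continuous map ι : ℝⁿ → ℝⁿ which satisfies ι ∘ A = M ∘ ι and sup_{x∈ℝⁿ} |ι(x) − x| ≤ δC/(1 − δ). Moreover, if S ⊆ ℝⁿ satisfies A(S) ⊆ S and A(x) = M(x) for all x ∈ S, then ι(x) = x for all x ∈ S. -/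
open Filter Topology Function Set
open scoped NNReal

/-!
Since `ι_k x = M⁻ᵏ⁻¹ (M (Aᵏ x))` and `ι_{k+1} x = M⁻ᵏ⁻¹ (A (Aᵏ x))`, and
`M⁻ᵏ⁻¹` is `δᵏ⁺¹`-Lipschitz, consecutive approximants are `δᵏ⁺¹ C`-close uniformly in `x`. So
`(ι_k)` is uniformly Cauchy with a geometric rate, and its limit `ι` is continuous and lies
within `δC/(1 - δ)` of `ι_0 = id`. The conjugacy passes to the limit from
`ι_k ∘ A = M ∘ ι_{k+1}`, and on an `A`-invariant set where `A = M` every `ι_k` is the identity.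
-/

theorem Set.EqOn.iterate_of_mapsTo {α : Type*} {f g : α → α} {s : Set α} (h : EqOn f g s)
    (hf : MapsTo f s s) (n : ℕ) : EqOn f^[n] g^[n] s := by
  induction n with
  | zero => exact eqOn_refl _ _
  | succ n ih =>
    intro x hx
    rw [iterate_succ_apply, iterate_succ_apply, ih (hf hx), h hx]

variable {X : Type*} {M Minv A : X → X}

/-- The approximants `ι_k = M⁻ᵏ ∘ Aᵏ`, with `Minv` in the role of `M⁻¹`. -/
def conjApprox (Minv A : X → X) (k : ℕ) (x : X) : X := Minv^[k] (A^[k] x)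

theorem continuous_conjApprox [TopologicalSpace X] (hMinv : Continuous Minv) (hA : Continuous A)
    (k : ℕ) :
    Continuous (conjApprox Minv A k) :=
  (hMinv.iterate k).comp (hA.iterate k)

theorem conjApprox_eq_iterate_succ_apply (hleft : LeftInverse Minv M) (k : ℕ) (x : X) :
    conjApprox Minv A k x = Minv^[k + 1] (M (A^[k] x)) := by
  rw [iterate_succ_apply, hleft]
  rfl

theorem conjApprox_apply (hright : RightInverse Minv M) (k : ℕ) (x : X) :
    conjApprox Minv A k (A x) = M (conjApprox Minv A (k + 1) x) := by
  rw [conjApprox, conjApprox, iterate_succ_apply' Minv, hright, iterate_succ_apply]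

theorem conjApprox_eq_self_of_mapsTo {S : Set X} (hleft : LeftInverse Minv M)
    (hS : MapsTo A S S) (hAM : EqOn A M S) (k : ℕ) {x : X} (hx : x ∈ S) :
    conjApprox Minv A k x = x := by
  rw [conjApprox, hAM.iterate_of_mapsTo hS k hx, (hleft.iterate k) x]

variable [MetricSpace X] {K : ℝ≥0} {C : ℝ}

theorem dist_conjApprox_succ_le (hleft : LeftInverse Minv M) (hMinv : LipschitzWith K Minv)
    (hAM : ∀ x, dist (A x) (M x) ≤ C) (k : ℕ) (x : X) :
    dist (conjApprox Minv A k x) (conjApprox Minv A (k + 1) x) ≤ K * C * K ^ k := by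
  calc dist (conjApprox Minv A k x) (conjApprox Minv A (k + 1) x)
      = dist (Minv^[k + 1] (M (A^[k] x))) (Minv^[k + 1] (A (A^[k] x))) := by
        rw [conjApprox_eq_iterate_succ_apply hleft, conjApprox, iterate_succ_apply' A]
    _ ≤ K ^ (k + 1) * dist (M (A^[k] x)) (A (A^[k] x)) := by
        exact_mod_cast (hMinv.iterate (k + 1)).dist_le_mul _ _
    _ ≤ K ^ (k + 1) * C := by
        gcongr
        rw [dist_comm]
        exact hAM _
    _ = K * C * K ^ k := by ring

section Limit

variable (hleft : LeftInverse Minv M) (hMinv : LipschitzWith K Minv) (hK : K < 1)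
  (hAM : ∀ x, dist (A x) (M x) ≤ C)
include hleft hMinv hK hAM

theorem cauchySeq_conjApprox (x : X) : CauchySeq (conjApprox Minv A · x) :=
  cauchySeq_of_le_geometric _ _ hK (dist_conjApprox_succ_le hleft hMinv hAM · x)

variable {ι : X → X} (hι : ∀ x, Tendsto (conjApprox Minv A · x) atTop (𝓝 (ι x)))
include hι

theorem dist_conjApprox_le_of_tendsto (k : ℕ) (x : X) :
    dist (conjApprox Minv A k x) (ι x) ≤ K * C * K ^ k / (1 - K) :=
  dist_le_of_le_geometric_of_tendsto _ _ hK (dist_conjApprox_succ_le hleft hMinv hAM · x) (hι x) k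

theorem dist_le_of_tendsto_conjApprox (x : X) : dist (ι x) x ≤ K * C / (1 - K) := by
  simpa [conjApprox, dist_comm] using dist_conjApprox_le_of_tendsto hleft hMinv hK hAM hι 0 x

theorem tendstoUniformly_conjApprox : TendstoUniformly (conjApprox Minv A) ι atTop := by
  have hbound : Tendsto (fun k : ℕ => K * C * K ^ k / (1 - K)) atTop (𝓝 0) := by
    simpa using ((tendsto_pow_atTop_nhds_zero_of_lt_one K.2 hK).const_mul
      ((K : ℝ) * C)).div_const (1 - (K : ℝ))
  rw [Metric.tendstoUniformly_iff]
  intro ε hε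
  filter_upwards [hbound.eventually (gt_mem_nhds hε)] with k hk x
  rw [dist_comm]
  exact (dist_conjApprox_le_of_tendsto hleft hMinv hK hAM hι k x).trans_lt hk

end Limit

theorem semiconj_of_tendsto_conjApprox (hright : RightInverse Minv M) (hM : Continuous M)
    {ι : X → X} (hι : ∀ x, Tendsto (conjApprox Minv A · x) atTop (𝓝 (ι x))) :
    Semiconj ι A M := by
  intro x
  have hshift : Tendsto (fun k => M (conjApprox Minv A (k + 1) x)) atTop (𝓝 (M (ι x))) :=
    (hM.tendsto _).comp ((hι x).comp (tendsto_add_atTop_nat 1))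
  simp only [← conjApprox_apply hright] at hshift
  exact tendsto_nhds_unique (hι (A x)) hshift

theorem eq_self_of_tendsto_conjApprox {S : Set X} (hleft : LeftInverse Minv M)
    (hS : MapsTo A S S) (hAM : EqOn A M S) {ι : X → X}
    (hι : ∀ x, Tendsto (conjApprox Minv A · x) atTop (𝓝 (ι x))) {x : X} (hx : x ∈ S) :
    ι x = x := by
  have hconst := hι x
  simp only [conjApprox_eq_self_of_mapsTo hleft hS hAM _ hx] at hconst
  exact tendsto_nhds_unique hconst tendsto_const_nhds

/-- The conjugacy construction of Proposition 1.5(ii): if `M` is an invertible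
continuous linear map with `‖M⁻¹‖ ≤ δ < 1` and `A` is continuous with
`|A(x) − M(x)| ≤ C` for all `x`, then `ι_k = M^{−k} ∘ A^k` converges uniformly to a
continuous map `ι` satisfying `ι ∘ A = M ∘ ι` and `|ι(x) − x| ≤ δC/(1 − δ)`; moreover
`ι` is the identity on any `A`-invariant set on which `A` agrees with `M`. -/
theorem conjugacy_construction {n : ℕ} (δ C : ℝ) (hδ : δ < 1)
    (M Minv : EuclideanSpace ℝ (Fin n) →L[ℝ] EuclideanSpace ℝ (Fin n))
    (hMinv_left : ∀ x, Minv (M x) = x) (hMinv_right : ∀ x, M (Minv x) = x)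
    (hMinv_norm : ‖Minv‖ ≤ δ)
    (A : EuclideanSpace ℝ (Fin n) → EuclideanSpace ℝ (Fin n))
    (hA_cont : Continuous A)
    (hC : ∀ x, ‖A x - M x‖ ≤ C) :
    ∃ ι : EuclideanSpace ℝ (Fin n) → EuclideanSpace ℝ (Fin n),
      Continuous ι ∧
      TendstoUniformly (fun (k : ℕ) (x : EuclideanSpace ℝ (Fin n)) =>
        (⇑Minv)^[k] (A^[k] x)) ι atTop ∧
      (∀ x, ι (A x) = M (ι x)) ∧
      (∀ x, ‖ι x - x‖ ≤ δ * C / (1 - δ)) ∧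
      (∀ S : Set (EuclideanSpace ℝ (Fin n)), Set.MapsTo A S S →
        (∀ x ∈ S, A x = M x) → ∀ x ∈ S, ι x = x) := by
  let K : ℝ≥0 := ⟨δ, (norm_nonneg _).trans hMinv_norm⟩
  have hK : K < 1 := hδ
  have hlip : LipschitzWith K Minv := Minv.lipschitz.weaken hMinv_norm
  have hleft : LeftInverse Minv M := hMinv_left
  have hAM : ∀ x, dist (A x) (M x) ≤ C := fun x => (dist_eq_norm _ _).trans_le (hC x)
  choose ι hι using fun x =>
    cauchySeq_tendsto_of_complete (cauchySeq_conjApprox hleft hlip hK hAM x)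
  have hunif := tendstoUniformly_conjApprox hleft hlip hK hAM hι
  refine ⟨ι, hunif.continuous (.of_forall (continuous_conjApprox Minv.continuous hA_cont)),
    hunif, semiconj_of_tendsto_conjApprox hMinv_right M.continuous hι, fun x => ?_,
    fun S hS hSM _ hx => eq_self_of_tendsto_conjApprox hleft hS hSM hι hx⟩
  rw [← dist_eq_norm]
  exact dist_le_of_tendsto_conjApprox hleft hlip hK hAM hι x
end

section
/- Let f : ℂ∖{0} → ℂ be the Lattès map f(z) = (z + z⁻¹)/(2i), and let z₀ ∈ ℂ satisfy z₀² = 1/(2i − 1) (so z₀ ≠ 0). Then f(z₀) = z₀, the complex derivative f'(z₀) has modulus |f'(z₀)| = √2, and (f'(z₀))⁴ = −4; in particular the multiplier of f⁴ at the fixed point z₀ is the real number −4. -/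
/-! The relation `z₀² = 1/(2i − 1)` says exactly `z₀⁻¹ = (2i − 1) z₀`, so `z₀ + z₀⁻¹ = 2i z₀`
and `z₀` is fixed. The derivative `(1 − z⁻²)/(2i)` becomes `(2 − 2i)/(2i) = −1 − i` at `z₀`,
whose modulus is `√2` and whose square is `2i`, so its fourth power is `−4`. -/

open Complex

lemma ne_zero_of_sq_eq_one_div {K : Type*} [Field K] {a z : K} (ha : a ≠ 0)
    (h : z ^ 2 = 1 / a) : z ≠ 0 :=
  ne_zero_pow two_ne_zero (h ▸ one_div_ne_zero ha)

lemma inv_eq_mul_of_sq_eq_one_div {K : Type*} [Field K] {a z : K} (ha : a ≠ 0)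
    (h : z ^ 2 = 1 / a) : z⁻¹ = a * z := by
  have hz := ne_zero_of_sq_eq_one_div ha h
  calc z⁻¹ = z * (z ^ 2)⁻¹ := by field_simp
    _ = a * z := by rw [h, one_div, inv_inv, mul_comm]

lemma add_inv_div_eq_self {K : Type*} [Field K] {c z : K} (hc : c ≠ 0)
    (h : z⁻¹ = (c - 1) * z) : (z + z⁻¹) / c = z := by
  rw [h, div_eq_iff hc]
  ring

lemma hasDerivAt_add_inv_div {𝕜 : Type*} [NontriviallyNormedField 𝕜] (c : 𝕜) {z : 𝕜}
    (hz : z ≠ 0) : HasDerivAt (fun w : 𝕜 => (w + w⁻¹) / c) ((1 - (z ^ 2)⁻¹) / c) z := by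
  simpa [sub_eq_add_neg] using ((hasDerivAt_id z).add (hasDerivAt_inv hz)).div_const c

lemma two_mul_I_sub_one_ne_zero : 2 * I - 1 ≠ 0 := by
  intro h
  simpa using congrArg re h

lemma one_sub_two_mul_I_sub_one_div : (1 - (2 * I - 1)) / (2 * I) = -1 - I := by
  rw [div_eq_iff (by simp)]
  linear_combination (2 : ℂ) * I_sq

lemma norm_neg_one_sub_I : ‖-1 - I‖ = Real.sqrt 2 := by
  rw [show -1 - I = ⟨-1, -1⟩ from Complex.ext (by simp) (by simp), norm_def, normSq_mk]
  norm_num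

lemma neg_one_sub_I_sq : (-1 - I) ^ 2 = 2 * I := by
  linear_combination I_sq

lemma neg_one_sub_I_pow_four : (-1 - I) ^ 4 = -4 := by
  rw [show 4 = 2 * 2 from rfl, pow_mul, neg_one_sub_I_sq]
  linear_combination 4 * I_sq

/-- Remark 1.6(c): for the Lattès map `f(z) = (z + z⁻¹)/(2i)` and `z₀` with
`z₀² = 1/(2i − 1)`, the point `z₀` is a nonzero fixed point of `f`, the derivative
`f'(z₀)` has modulus `√2`, and `(f'(z₀))⁴ = −4`, so the multiplier of `f⁴` at `z₀`
is the real number `−4`. -/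
theorem lattes_multiplier (z₀ : ℂ) (h : z₀ ^ 2 = 1 / (2 * Complex.I - 1)) :
    z₀ ≠ 0 ∧
    (z₀ + z₀⁻¹) / (2 * Complex.I) = z₀ ∧
    ∃ d : ℂ, HasDerivAt (fun z : ℂ => (z + z⁻¹) / (2 * Complex.I)) d z₀ ∧
      ‖d‖ = Real.sqrt 2 ∧ d ^ 4 = -4 := by
  have hz₀ := ne_zero_of_sq_eq_one_div two_mul_I_sub_one_ne_zero h
  have hinv := inv_eq_mul_of_sq_eq_one_div two_mul_I_sub_one_ne_zero h
  have hinv_sq : (z₀ ^ 2)⁻¹ = 2 * I - 1 := by rw [h, one_div, inv_inv]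
  refine ⟨hz₀, add_inv_div_eq_self (by simp) hinv, -1 - I, ?_,
    norm_neg_one_sub_I, neg_one_sub_I_pow_four⟩
  simpa only [hinv_sq, one_sub_two_mul_I_sub_one_div] using hasDerivAt_add_inv_div (2 * I) hz₀
end
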